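/- arXiv:solv-int/9905003 — 4 statements merged into one kernel-verified Lean document; each statement's English description precedes it below -/
import Mathlib

section
/- The pair x(t) = tan(ω(t - t₀)), y(t) = 1/(α·cos²(ω(t - t₀)) - k·sin(2ω(t - t₀))/2) satisfies the coupled system x' = ω(x² + 1), y' = ω(2xy + ky²) at every point where both functions are defined (cos(ω(t - t₀)) ≠ 0 and the denominator of y is nonzero). -/
private lemma riccati_aux (ω α k s c : ℝ) (hc : c ≠ 0)
    (hd : α * c ^ 2 - k * (2 * s * c) / 2 ≠ 0) :
    -(α * (2 * c ^ 1 * (-s * ω)) - k * ((1 - 2 * s ^ 2) * (2 * ω)) / 2)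
        / (α * c ^ 2 - k * (2 * s * c) / 2) ^ 2
      = ω * (2 * (s / c) * (1 / (α * c ^ 2 - k * (2 * s * c) / 2))
          + k * (1 / (α * c ^ 2 - k * (2 * s * c) / 2)) ^ 2) := by
  set d := α * c ^ 2 - k * (2 * s * c) / 2 with hdd
  rw [div_eq_iff (pow_ne_zero 2 hd)]
  field_simp
  rw [hdd]
  ring

/-- `x(t) = tan(ω(t - t₀))`, `y(t) = 1/(α cos²(ω(t-t₀)) - k sin(2ω(t-t₀))/2)` satisfy
the coupled system `x' = ω(x² + 1)`, `y' = ω(2xy + ky²)` wherever defined. -/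
theorem coupled_riccati_solution (ω t₀ α k : ℝ)
    (x y : ℝ → ℝ)
    (hx : ∀ t, x t = Real.tan (ω * (t - t₀)))
    (hy : ∀ t, y t = 1 / (α * Real.cos (ω * (t - t₀)) ^ 2
      - k * Real.sin (2 * ω * (t - t₀)) / 2)) :
    ∀ t : ℝ, Real.cos (ω * (t - t₀)) ≠ 0 →
      α * Real.cos (ω * (t - t₀)) ^ 2 - k * Real.sin (2 * ω * (t - t₀)) / 2 ≠ 0 →
      HasDerivAt x (ω * ((x t) ^ 2 + 1)) t ∧
        HasDerivAt y (ω * (2 * x t * y t + k * (y t) ^ 2)) t := by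
  intro t hcos hD
  have hxf : x = fun t => Real.tan (ω * (t - t₀)) := funext hx
  have hyf : y = fun t => 1 / (α * Real.cos (ω * (t - t₀)) ^ 2
      - k * Real.sin (2 * ω * (t - t₀)) / 2) := funext hy
  have hu : HasDerivAt (fun s : ℝ => ω * (s - t₀)) ω t := by
    simpa using ((hasDerivAt_id t).sub_const t₀).const_mul ω
  have hu2 : HasDerivAt (fun s : ℝ => 2 * ω * (s - t₀)) (2 * ω) t := by
    simpa using ((hasDerivAt_id t).sub_const t₀).const_mul (2 * ω)
  set u := ω * (t - t₀) with hudef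
  constructor
  · have hxd : HasDerivAt x (1 / Real.cos u ^ 2 * ω) t := by
      rw [hxf]
      exact (Real.hasDerivAt_tan hcos).comp t hu
    have : 1 / Real.cos u ^ 2 * ω = ω * (x t ^ 2 + 1) := by
      rw [hx t, ← hudef, Real.tan_eq_sin_div_cos]
      field_simp
      rw [Real.sin_sq_add_cos_sq]; ring
    rwa [this] at hxd
  · -- derivative of denominator
    have hc2 : HasDerivAt (fun s : ℝ => Real.cos (ω * (s - t₀)) ^ 2)
        (2 * Real.cos u ^ 1 * (-Real.sin u * ω)) t := (hu.cos).pow 2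
    have hs2 : HasDerivAt (fun s : ℝ => Real.sin (2 * ω * (s - t₀)))
        (Real.cos (2 * ω * (t - t₀)) * (2 * ω)) t := hu2.sin
    have hDd : HasDerivAt (fun s : ℝ => α * Real.cos (ω * (s - t₀)) ^ 2
        - k * Real.sin (2 * ω * (s - t₀)) / 2)
        (α * (2 * Real.cos u ^ 1 * (-Real.sin u * ω))
          - k * (Real.cos (2 * ω * (t - t₀)) * (2 * ω)) / 2) t :=
      (hc2.const_mul α).sub ((hs2.const_mul k).div_const 2)
    have hyd := hDd.inv hD
    have hyd' : HasDerivAt y (-(α * (2 * Real.cos u ^ 1 * (-Real.sin u * ω))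
          - k * (Real.cos (2 * ω * (t - t₀)) * (2 * ω)) / 2)
        / (α * Real.cos u ^ 2 - k * Real.sin (2 * ω * (t - t₀)) / 2) ^ 2) t := by
      rw [hyf]
      simpa [one_div, Pi.inv_def] using hyd
    have heq : -(α * (2 * Real.cos u ^ 1 * (-Real.sin u * ω))
          - k * (Real.cos (2 * ω * (t - t₀)) * (2 * ω)) / 2)
        / (α * Real.cos u ^ 2 - k * Real.sin (2 * ω * (t - t₀)) / 2) ^ 2
        = ω * (2 * x t * y t + k * (y t) ^ 2) := by
      have h2u : 2 * ω * (t - t₀) = 2 * u := by rw [hudef]; ring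
      have hpyth : Real.sin u ^ 2 = 1 - Real.cos u ^ 2 := by
        have := Real.sin_sq_add_cos_sq u; linarith
      have hsc : Real.sin (2 * ω * (t - t₀)) = 2 * Real.sin u * Real.cos u := by
        rw [h2u, Real.sin_two_mul]
      have hcc : Real.cos (2 * ω * (t - t₀)) = 1 - 2 * Real.sin u ^ 2 := by
        rw [h2u, Real.cos_two_mul', hpyth]; ring
      have hD2 : α * Real.cos u ^ 2 - k * (2 * Real.sin u * Real.cos u) / 2 ≠ 0 := by
        rwa [hsc] at hD
      rw [hx t, hy t, ← hudef, Real.tan_eq_sin_div_cos, hsc, hcc]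
      exact riccati_aux ω α k (Real.sin u) (Real.cos u) hcos hD2
    rwa [heq] at hyd'
end

section
/- The unique solution (x̄(σ), ȳ(σ)) of the flow equations dx̄/dσ = ω(1 + x̄²), dȳ/dσ = ω(2x̄ȳ + kȳ²) with initial conditions x̄(0) = x, ȳ(0) = y is given by x̄ = (x cos σω + sin σω)/(-x sin σω + cos σω) and ȳ = y(x²+1)/D, where D = (x²+1+kxy)(-x sin σω + cos σω)² - ky(x cos σω + sin σω)(-x sin σω + cos σω), on the interval where the denominators are nonzero. -/
/-- The flow equations `dx̄/dσ = ω(1 + x̄²)`, `dȳ/dσ = ω(2x̄ȳ + kȳ²)` with initial data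
`x̄(0) = x`, `ȳ(0) = y` are solved by the stated explicit formulas wherever the
denominators are nonzero. -/
theorem sl2_flow_solution (ω k x y : ℝ)
    (xb yb : ℝ → ℝ)
    (hxb : ∀ σ, xb σ = (x * Real.cos (σ * ω) + Real.sin (σ * ω)) /
      (-x * Real.sin (σ * ω) + Real.cos (σ * ω)))
    (hyb : ∀ σ, yb σ = y * (x ^ 2 + 1) /
      ((x ^ 2 + 1 + k * x * y) * (-x * Real.sin (σ * ω) + Real.cos (σ * ω)) ^ 2
        - k * y * (x * Real.cos (σ * ω) + Real.sin (σ * ω))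
          * (-x * Real.sin (σ * ω) + Real.cos (σ * ω)))) :
    xb 0 = x ∧ yb 0 = y ∧
      ∀ σ : ℝ, (-x * Real.sin (σ * ω) + Real.cos (σ * ω) ≠ 0) →
        ((x ^ 2 + 1 + k * x * y) * (-x * Real.sin (σ * ω) + Real.cos (σ * ω)) ^ 2
          - k * y * (x * Real.cos (σ * ω) + Real.sin (σ * ω))
            * (-x * Real.sin (σ * ω) + Real.cos (σ * ω)) ≠ 0) →
        HasDerivAt xb (ω * (1 + (xb σ) ^ 2)) σ ∧
          HasDerivAt yb (ω * (2 * xb σ * yb σ + k * (yb σ) ^ 2)) σ := by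
  have hx1 : (x:ℝ) ^ 2 + 1 ≠ 0 := by positivity
  refine ⟨by simp [hxb 0], ?_, ?_⟩
  · rw [hyb 0]
    norm_num
    rw [show x ^ 2 + 1 + k * x * y - k * y * x = x ^ 2 + 1 by ring, mul_div_assoc,
      div_self hx1, mul_one]
  · intro σ hv hD
    have hm : HasDerivAt (fun t : ℝ => t * ω) ω σ := by
      simpa using (hasDerivAt_id σ).mul_const ω
    have hc : HasDerivAt (fun t : ℝ => Real.cos (t * ω)) (-Real.sin (σ * ω) * ω) σ :=
      by have := (Real.hasDerivAt_cos (σ * ω)).comp σ hm; exact this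
    have hs : HasDerivAt (fun t : ℝ => Real.sin (t * ω)) (Real.cos (σ * ω) * ω) σ :=
      by have := (Real.hasDerivAt_sin (σ * ω)).comp σ hm; exact this
    have hu : HasDerivAt (fun t => x * Real.cos (t * ω) + Real.sin (t * ω))
        (ω * (-x * Real.sin (σ * ω) + Real.cos (σ * ω))) σ := by
      have := (hc.const_mul x).add hs
      exact this.congr_deriv (by ring)
    have hvd : HasDerivAt (fun t => -x * Real.sin (t * ω) + Real.cos (t * ω))
        (-(ω * (x * Real.cos (σ * ω) + Real.sin (σ * ω)))) σ := by
      have := (hs.const_mul (-x)).add hc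
      exact this.congr_deriv (by ring)
    have pyth : Real.sin (σ * ω) ^ 2 + Real.cos (σ * ω) ^ 2 = 1 :=
      Real.sin_sq_add_cos_sq (σ * ω)
    have hxbf : xb = fun t => (x * Real.cos (t * ω) + Real.sin (t * ω)) /
        (-x * Real.sin (t * ω) + Real.cos (t * ω)) := funext hxb
    have hybf : yb = fun t => y * (x ^ 2 + 1) /
        ((x ^ 2 + 1 + k * x * y) * (-x * Real.sin (t * ω) + Real.cos (t * ω)) ^ 2
          - k * y * (x * Real.cos (t * ω) + Real.sin (t * ω))
            * (-x * Real.sin (t * ω) + Real.cos (t * ω))) := funext hyb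
    have hxv : xb σ * (-x * Real.sin (σ * ω) + Real.cos (σ * ω))
        = x * Real.cos (σ * ω) + Real.sin (σ * ω) := by
      rw [hxb σ]; exact div_mul_cancel₀ _ hv
    have hyD : yb σ * ((x ^ 2 + 1 + k * x * y) * (-x * Real.sin (σ * ω) + Real.cos (σ * ω)) ^ 2
          - k * y * (x * Real.cos (σ * ω) + Real.sin (σ * ω))
            * (-x * Real.sin (σ * ω) + Real.cos (σ * ω))) = y * (x ^ 2 + 1) := by
      rw [hyb σ]; exact div_mul_cancel₀ _ hD
    constructor
    · have H := hu.div hvd hv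
      rw [show ((fun t => x * Real.cos (t * ω) + Real.sin (t * ω)) /
        fun t => -x * Real.sin (t * ω) + Real.cos (t * ω)) = xb from hxbf.symm] at H
      refine H.congr_deriv ?_
      symm
      rw [eq_div_iff (pow_ne_zero 2 hv)]
      linear_combination (ω * (xb σ * (-x * Real.sin (σ * ω) + Real.cos (σ * ω))
        + (x * Real.cos (σ * ω) + Real.sin (σ * ω)))) * hxv
    · have hDd : HasDerivAt (fun t =>
          (x ^ 2 + 1 + k * x * y) * (-x * Real.sin (t * ω) + Real.cos (t * ω)) ^ 2
            - k * y * (x * Real.cos (t * ω) + Real.sin (t * ω))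
              * (-x * Real.sin (t * ω) + Real.cos (t * ω)))
          ((x ^ 2 + 1 + k * x * y) * (2 * (-x * Real.sin (σ * ω) + Real.cos (σ * ω))
              * (-(ω * (x * Real.cos (σ * ω) + Real.sin (σ * ω)))))
            - k * y * ((ω * (-x * Real.sin (σ * ω) + Real.cos (σ * ω)))
                * (-x * Real.sin (σ * ω) + Real.cos (σ * ω))
              + (x * Real.cos (σ * ω) + Real.sin (σ * ω))
                * (-(ω * (x * Real.cos (σ * ω) + Real.sin (σ * ω)))))) σ := by
        have h1 := ((hvd.pow 2).const_mul (x ^ 2 + 1 + k * x * y))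
        have h2 := ((hu.const_mul (k * y)).mul hvd)
        have := h1.sub h2
        refine this.congr_deriv ?_
        push_cast
        ring
      have H := (hasDerivAt_const σ (y * (x ^ 2 + 1))).div hDd hD
      rw [show ((fun _ : ℝ => y * (x ^ 2 + 1)) / fun t =>
          (x ^ 2 + 1 + k * x * y) * (-x * Real.sin (t * ω) + Real.cos (t * ω)) ^ 2
            - k * y * (x * Real.cos (t * ω) + Real.sin (t * ω))
              * (-x * Real.sin (t * ω) + Real.cos (t * ω))) = yb from hybf.symm] at H
      refine H.congr_deriv ?_
      symm
      rw [eq_div_iff (pow_ne_zero 2 hD)]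
      linear_combination
        (2 * ω * xb σ * ((x ^ 2 + 1 + k * x * y)
            * (-x * Real.sin (σ * ω) + Real.cos (σ * ω)) ^ 2
          - k * y * (x * Real.cos (σ * ω) + Real.sin (σ * ω))
            * (-x * Real.sin (σ * ω) + Real.cos (σ * ω)))
          + ω * k * (yb σ * ((x ^ 2 + 1 + k * x * y)
              * (-x * Real.sin (σ * ω) + Real.cos (σ * ω)) ^ 2
            - k * y * (x * Real.cos (σ * ω) + Real.sin (σ * ω))
              * (-x * Real.sin (σ * ω) + Real.cos (σ * ω))) + y * (x ^ 2 + 1))) * hyD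
        + (2 * ω * (y * (x ^ 2 + 1)) * ((x ^ 2 + 1 + k * x * y)
              * (-x * Real.sin (σ * ω) + Real.cos (σ * ω))
            - k * y * (x * Real.cos (σ * ω) + Real.sin (σ * ω)))) * hxv
        + (-(ω * k * y ^ 2 * (x ^ 2 + 1) ^ 2)) * pyth
end

section
/- Let b ∈ ℝ with b² > 3, a = 2b(b²+9)/27, β = (-b + √(3(b²-3)))/3, k = β + b/3 ≠ 0, and P, Q, R real constants. Then x(σ) = -k(2Pe^{kσ} + Q)/(Pe^{kσ} + Q + Re^{-kσ}) + β and y(σ) = k(4(β-k)Pe^{kσ} + (2β-k)Q)/(Pe^{kσ} + Q + Re^{-kσ}) - β² - 1 satisfy the projective Riccati system x' = 1 + y + x², y' = a + by + xy wherever the denominator Pe^{kσ} + Q + Re^{-kσ} is nonzero. -/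
/-- Explicit solution of the projective Riccati system `x' = 1 + y + x²`,
`y' = a + by + xy` in the special case `a = 2b(b² + 9)/27`. -/
theorem projective_riccati_explicit_solution (b : ℝ) (hb : b ^ 2 > 3)
    (a β k P Q R : ℝ)
    (ha : a = 2 * b * (b ^ 2 + 9) / 27)
    (hβ : β = (-b + Real.sqrt (3 * (b ^ 2 - 3))) / 3)
    (hk : k = β + b / 3) (hk0 : k ≠ 0)
    (x y : ℝ → ℝ)
    (hx : ∀ σ, x σ = -k * (2 * P * Real.exp (k * σ) + Q) /
      (P * Real.exp (k * σ) + Q + R * Real.exp (-k * σ)) + β)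
    (hy : ∀ σ, y σ = k * (4 * (β - k) * P * Real.exp (k * σ) + (2 * β - k) * Q) /
      (P * Real.exp (k * σ) + Q + R * Real.exp (-k * σ)) - β ^ 2 - 1) :
    ∀ σ : ℝ, P * Real.exp (k * σ) + Q + R * Real.exp (-k * σ) ≠ 0 →
      HasDerivAt x (1 + y σ + (x σ) ^ 2) σ ∧
        HasDerivAt y (a + b * y σ + x σ * y σ) σ := by
  have h3 : (0:ℝ) ≤ 3 * (b ^ 2 - 3) := by nlinarith
  have hsq : Real.sqrt (3 * (b ^ 2 - 3)) ^ 2 = 3 * (b ^ 2 - 3) := Real.sq_sqrt h3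
  have hk2 : 3 * k ^ 2 = b ^ 2 - 3 := by
    have hkv : k = Real.sqrt (3 * (b ^ 2 - 3)) / 3 := by rw [hk, hβ]; ring
    rw [hkv]; nlinarith [hsq]
  have hβk : β = k - b / 3 := by linarith [hk]
  have hxf : x = fun σ => -k * (2 * P * Real.exp (k * σ) + Q) /
      (P * Real.exp (k * σ) + Q + R * Real.exp (-k * σ)) + β := funext hx
  have hyf : y = fun σ => k * (4 * (β - k) * P * Real.exp (k * σ) + (2 * β - k) * Q) /
      (P * Real.exp (k * σ) + Q + R * Real.exp (-k * σ)) - β ^ 2 - 1 := funext hy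
  intro σ hD
  have hu : HasDerivAt (fun σ : ℝ => Real.exp (k * σ)) (Real.exp (k * σ) * k) σ := by
    simpa using ((hasDerivAt_id σ).const_mul k).exp
  have hv : HasDerivAt (fun σ : ℝ => Real.exp (-k * σ)) (Real.exp (-k * σ) * -k) σ := by
    simpa using ((hasDerivAt_id σ).const_mul (-k)).exp
  have hDd := ((hu.const_mul P).add_const Q).add (hv.const_mul R)
  have hvinv : Real.exp (-k * σ) = (Real.exp (k * σ))⁻¹ := by
    rw [neg_mul, Real.exp_neg]
  have hu0 : Real.exp (k * σ) ≠ 0 := Real.exp_ne_zero _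
  have hD2 : P * Real.exp (k * σ) ^ 2 + Q * Real.exp (k * σ) + R ≠ 0 := by
    intro h
    apply hD
    rw [hvinv]
    field_simp
    linear_combination h
  have hDrw : P * Real.exp (k * σ) + Q + R * (Real.exp (k * σ))⁻¹ =
      (P * Real.exp (k * σ) ^ 2 + Q * Real.exp (k * σ) + R) / Real.exp (k * σ) := by
    field_simp
  have hD3 : Real.exp (k * σ) * (P * Real.exp (k * σ) + Q) + R ≠ 0 := by
    intro h; apply hD2; linear_combination h
  constructor
  · have hN := ((hu.const_mul (2 * P)).add_const Q).const_mul (-k)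
    have hxd := (hN.div hDd hD).add_const β
    rw [hxf]
    refine hxd.congr_deriv ?_
    symm
    beta_reduce
    simp only [Pi.add_apply]
    rw [hy σ]
    rw [hvinv] at hD ⊢
    rw [hDrw]
    field_simp [hD3]
    ring
  · have hN := ((hu.const_mul (4 * (β - k) * P)).add_const ((2 * β - k) * Q)).const_mul k
    have hyd := ((hN.div hDd hD).sub_const (β ^ 2)).sub_const 1
    rw [hyf]
    refine hyd.congr_deriv ?_
    symm
    beta_reduce
    simp only [Pi.add_apply]
    rw [hx σ, ha, hβk]
    rw [hvinv] at hD ⊢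
    rw [hDrw]
    field_simp [hD3]
    linear_combination ((-243) * R ^ 2 * k +
      (-243) * Real.exp (k * σ) * Q * R * k +
      (243) * Real.exp (k * σ) ^ 3 * P * Q * k +
      (243) * Real.exp (k * σ) ^ 4 * P ^ 2 * k) * hk2
end

section
/- Let ξ = [[b/2, a], [-c, -b/2]] (trace zero 2×2 real matrix) and let G(σ) = exp(σξ) = [[G₁₁, G₁₂],[G₂₁, G₂₂]]. If w : ℝ → ℝ is a solution of the scalar Riccati equation w' = a + bw + cw² (with constant a, b, c), then w(t + σ) = (G₁₁w(t) + G₁₂)/(G₂₁w(t) + G₂₂) whenever the denominator is nonzero. -/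
open NormedSpace


/-- A solution of the scalar Riccati equation `w' = a + bw + cw²` with constant
coefficients also solves the group-theoretical discretization: with
`ξ = [[b/2, a], [-c, -b/2]]` and `G = exp(σξ)`, one has
`w(t + σ) = (G₁₁ w(t) + G₁₂)/(G₂₁ w(t) + G₂₂)` whenever the denominator is nonzero. -/
theorem riccati_solution_solves_discretization (a b c : ℝ)
    (w : ℝ → ℝ)
    (hw : ∀ t : ℝ, HasDerivAt w (a + b * w t + c * (w t) ^ 2) t)
    (ξ G : Matrix (Fin 2) (Fin 2) ℝ) (σ : ℝ)
    (hξ : ξ = !![b / 2, a; -c, -b / 2])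
    (hG : G = NormedSpace.exp (σ • ξ)) :
    ∀ t : ℝ, G 1 0 * w t + G 1 1 ≠ 0 →
      w (t + σ) = (G 0 0 * w t + G 0 1) / (G 1 0 * w t + G 1 1) := by
  letI : SeminormedRing (Matrix (Fin 2) (Fin 2) ℝ) := Matrix.linftyOpSemiNormedRing
  letI : NormedRing (Matrix (Fin 2) (Fin 2) ℝ) := Matrix.linftyOpNormedRing
  letI : NormedAlgebra ℝ (Matrix (Fin 2) (Fin 2) ℝ) := Matrix.linftyOpNormedAlgebra
  intro t _
  have hwc : Continuous w := continuous_iff_continuousAt.2 fun u => (hw u).continuousAt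
  -- the integrating factor
  set f : ℝ → ℝ := fun τ => c * w (t + τ) + b / 2 with hfdef
  have hfc : Continuous f := by fun_prop
  set y : ℝ → ℝ := fun s => Real.exp (-∫ τ in (0:ℝ)..s, f τ) with hydef
  set x : ℝ → ℝ := fun s => w (t + s) * y s with hxdef
  have hypos : ∀ s, 0 < y s := fun s => Real.exp_pos _
  have hy : ∀ s, HasDerivAt y (-c * x s + -(b / 2) * y s) s := by
    intro s
    have h1 : HasDerivAt (fun u : ℝ => -∫ τ in (0:ℝ)..u, f τ) (-f s) s :=
      ((hfc.integral_hasStrictDerivAt 0 s).hasDerivAt).neg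
    have h2 := h1.exp
    convert h2 using 1
    simp only [hxdef, hydef, hfdef]
    ring
  have hx : ∀ s, HasDerivAt x (b / 2 * x s + a * y s) s := by
    intro s
    have hwts : HasDerivAt (fun u : ℝ => w (t + u))
        (a + b * w (t + s) + c * (w (t + s)) ^ 2) s := by
      exact ((hw (t + s)).comp s ((hasDerivAt_id s).const_add t)).congr_deriv (mul_one _)
    have h2 := hwts.mul (hy s)
    refine h2.congr_deriv ?_
    simp only [hxdef, hydef]
    ring
  -- the backward matrix flow
  set N : ℝ → Matrix (Fin 2) (Fin 2) ℝ := fun s => exp (s • (-ξ)) with hNdef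
  have hN : ∀ s, HasDerivAt N (N s * (-ξ)) s := fun s => hasDerivAt_exp_smul_const (-ξ) s
  -- entry continuous linear maps
  have hNe : ∀ (s : ℝ) (i j : Fin 2), HasDerivAt (fun u => N u i j) ((N s * (-ξ)) i j) s := by
    intro s i j
    let E : Matrix (Fin 2) (Fin 2) ℝ →L[ℝ] ℝ :=
      LinearMap.toContinuousLinearMap
        { toFun := fun M : Matrix (Fin 2) (Fin 2) ℝ => M i j,
          map_add' := fun _ _ => rfl, map_smul' := fun _ _ => rfl }
    exact (E.hasFDerivAt.comp_hasDerivAt s (hN s))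
  -- conserved quantities
  set u : Fin 2 → ℝ → ℝ := fun i s => N s i 0 * x s + N s i 1 * y s with hudef
  have hu : ∀ (i : Fin 2) (s : ℝ), HasDerivAt (u i) 0 s := by
    intro i s
    have h := ((hNe s i 0).mul (hx s)).add ((hNe s i 1).mul (hy s))
    refine h.congr_deriv ?_
    rw [hξ]
    fin_cases i <;>
      simp [Matrix.mul_apply, Fin.sum_univ_two, Matrix.neg_apply] <;> ring
  have huconst : ∀ (i : Fin 2), u i σ = u i 0 := by
    intro i
    exact is_const_of_deriv_eq_zero (fun s => (hu i s).differentiableAt)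
      (fun s => (hu i s).deriv) σ 0
  -- initial values
  have hy0 : y 0 = 1 := by simp [hydef]
  have hx0 : x 0 = w t := by simp [hxdef, hy0]
  have hN0 : N 0 = 1 := by simp [hNdef, exp_zero]
  have e0 : N σ 0 0 * x σ + N σ 0 1 * y σ = w t := by
    have := huconst 0
    simpa [hudef, hN0, hx0, hy0, Matrix.one_apply] using this
  have e1 : N σ 1 0 * x σ + N σ 1 1 * y σ = 1 := by
    have := huconst 1
    simpa [hudef, hN0, hx0, hy0, Matrix.one_apply] using this
  -- G * N σ = 1
  have hGN : G * N σ = 1 := by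
    rw [hG]
    show exp (σ • ξ) * exp (σ • -ξ) = 1
    rw [smul_neg]
    refine (exp_add_of_commute_of_mem_ball (𝕂 := ℝ) (Commute.neg_right (Commute.refl (σ • ξ)))
      ((expSeries_radius_eq_top ℝ (Matrix (Fin 2) (Fin 2) ℝ)).symm ▸ edist_lt_top _ _)
      ((expSeries_radius_eq_top ℝ (Matrix (Fin 2) (Fin 2) ℝ)).symm ▸ edist_lt_top _ _)).symm.trans ?_
    simp [exp_zero]
  have q00 : G 0 0 * N σ 0 0 + G 0 1 * N σ 1 0 = 1 := by
    have := congrFun (congrFun hGN 0) 0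
    simpa [Matrix.mul_apply, Fin.sum_univ_two, Matrix.one_apply] using this
  have q01 : G 0 0 * N σ 0 1 + G 0 1 * N σ 1 1 = 0 := by
    have := congrFun (congrFun hGN 0) 1
    simpa [Matrix.mul_apply, Fin.sum_univ_two, Matrix.one_apply] using this
  have q10 : G 1 0 * N σ 0 0 + G 1 1 * N σ 1 0 = 0 := by
    have := congrFun (congrFun hGN 1) 0
    simpa [Matrix.mul_apply, Fin.sum_univ_two, Matrix.one_apply] using this
  have q11 : G 1 0 * N σ 0 1 + G 1 1 * N σ 1 1 = 1 := by
    have := congrFun (congrFun hGN 1) 1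
    simpa [Matrix.mul_apply, Fin.sum_univ_two, Matrix.one_apply] using this
  have hxσ : x σ = G 0 0 * w t + G 0 1 := by
    linear_combination G 0 0 * e0 + G 0 1 * e1 - x σ * q00 - y σ * q01
  have hyσ : y σ = G 1 0 * w t + G 1 1 := by
    linear_combination G 1 0 * e0 + G 1 1 * e1 - x σ * q10 - y σ * q11
  have hws : w (t + σ) = x σ / y σ := by
    rw [hxdef]
    exact (mul_div_cancel_right₀ _ (hypos σ).ne').symm
  rw [hws, hxσ, hyσ]
end
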